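/- (Profiled single-group DM objective; cost correctness in Proposition 2.) Let L ≥ 0, K ≥ 1 be integers, v₁,…,v_K ∈ S unit vectors, s₁,…,s_L ∈ E arbitrary vectors (the aggregated matched vectors of the other groups), and set s_i := 0 for L < i ≤ L + K. Let τ₁, γ₀ > 0, J > 0, and 0 < m_i < J for 1 ≤ i ≤ L. For a feasible B ∈ {0,1}^{(L+K)×K} and θ ∈ S^{L+K} define G(B, θ) := τ₁ Σ_{i=1}^{L+K} ⟨θ_i, Σ_k B_{ik} v_k + s_i⟩ + Σ_{i=1}^{L} Σ_k B_{ik} log(m_i/(J − m_i)) + Σ_{i=L+1}^{L+K} Σ_k B_{ik}(log(γ₀/J) − log(i − L)). Define the cost C_{ik} := τ₁‖v_k + s_i‖ − τ₁‖s_i‖ + log(m_i/(J − m_i)) for 1 ≤ i ≤ L, and C_{ik} := τ₁ + log(γ₀/J) − log(i − L) for L < i ≤ L + K. Then for every feasible B: sup_{θ ∈ S^{L+K}} G(B, θ) = Σ_{i,k} B_{ik} C_{ik} + τ₁ Σ_{i=1}^{L} ‖s_i‖. -/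
import Mathlib


open RealInnerProductSpace

/-- `{0,1}`-valued indicator of a boolean entry of an assignment matrix. -/
def ind (b : Bool) : ℝ := if b then 1 else 0

/-- A binary matrix `B` (rows indexed by `I`, columns by `K'`) is feasible if each
column has exactly one `1` and each row has at most one `1`. -/
def Feasible {I K' : Type*} (B : I → K' → Bool) : Prop :=
  (∀ k, ∃! i, B i k = true) ∧
  (∀ i k₁ k₂, B i k₁ = true → B i k₂ = true → k₁ = k₂)

/-- The single-group DM objective `G(B, θ)` of Proposition 2: rows `Sum.inl i` are
the `L` existing global topics (with aggregated matched vectors `s i` from the other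
groups), rows `Sum.inr i'` are the potential `K` new topics (row `i = L + i' + 1`,
so `i - L = i' + 1`), which carry `s = 0`. -/
noncomputable def DMG {E : Type*} [NormedAddCommGroup E] [InnerProductSpace ℝ E]
    {L K : ℕ} (τ₁ γ₀ J : ℝ) (m : Fin L → ℝ) (s : Fin L → E) (v : Fin K → E)
    (B : Fin L ⊕ Fin K → Fin K → Bool) (θ : Fin L ⊕ Fin K → E) : ℝ :=
  τ₁ * (∑ i : Fin L ⊕ Fin K,
      ⟪θ i, (∑ k, ind (B i k) • v k) + Sum.elim s (fun _ => (0 : E)) i⟫) +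
  (∑ i : Fin L, ∑ k, ind (B (Sum.inl i) k) * Real.log (m i / (J - m i))) +
  (∑ i' : Fin K, ∑ k, ind (B (Sum.inr i') k) *
      (Real.log (γ₀ / J) - Real.log ((i' : ℕ) + 1)))

/-- The matching cost `C_{ik}` of Proposition 2 (for a fixed group `j`). -/
noncomputable def DMcost {E : Type*} [NormedAddCommGroup E] [InnerProductSpace ℝ E]
    {L K : ℕ} (τ₁ γ₀ J : ℝ) (m : Fin L → ℝ) (s : Fin L → E) (v : Fin K → E) :
    Fin L ⊕ Fin K → Fin K → ℝ
  | Sum.inl i, k => τ₁ * ‖v k + s i‖ - τ₁ * ‖s i‖ + Real.log (m i / (J - m i))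
  | Sum.inr i', _ => τ₁ + Real.log (γ₀ / J) - Real.log ((i' : ℕ) + 1)

lemma sum_ind_smul {K : ℕ} {M : Type*} [AddCommMonoid M] [Module ℝ M]
    (r : Fin K → Bool) (g : Fin K → M) (k₀ : Fin K) (h0 : r k₀ = true)
    (h : ∀ k, r k = true → k = k₀) :
    (∑ k, ind (r k) • g k) = g k₀ := by
  rw [Finset.sum_eq_single k₀]
  · simp [ind, h0]
  · intro k _ hk
    cases hrk : r k with
    | false => simp [ind, hrk]
    | true => exact absurd (h k hrk) hk
  · simp

/-- profiled single-group DM objective; cost correctness in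
Proposition 2: for every feasible `B`, the supremum of `G(B, ·)` over tuples of
unit vectors equals `Σ_{i,k} B_{ik} C_{ik} + τ₁ Σ_{i=1}^L ‖s_i‖`. -/
theorem stmt11 {E : Type*} [NormedAddCommGroup E] [InnerProductSpace ℝ E]
    [FiniteDimensional ℝ E] (hdim : 1 ≤ Module.finrank ℝ E)
    (L K : ℕ) (hK : 1 ≤ K)
    (v : Fin K → E) (hv : ∀ k, ‖v k‖ = 1) (s : Fin L → E)
    (τ₁ γ₀ J : ℝ) (hτ₁ : 0 < τ₁) (hγ₀ : 0 < γ₀) (hJ : 0 < J)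
    (m : Fin L → ℝ) (hm : ∀ i, 0 < m i ∧ m i < J)
    (B : Fin L ⊕ Fin K → Fin K → Bool) (hB : Feasible B) :
    IsLUB ((fun θ => DMG τ₁ γ₀ J m s v B θ) ''
        {θ : Fin L ⊕ Fin K → E | ∀ i, ‖θ i‖ = 1})
      ((∑ i, ∑ k, ind (B i k) * DMcost τ₁ γ₀ J m s v i k) +
        τ₁ * ∑ i : Fin L, ‖s i‖) := by
  classical
  set w : Fin L ⊕ Fin K → E := fun i =>
    (∑ k, ind (B i k) • v k) + Sum.elim s (fun _ => (0 : E)) i with hw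
  set C₂ : ℝ := ∑ i : Fin L, ∑ k, ind (B (Sum.inl i) k) * Real.log (m i / (J - m i)) with hC₂
  set C₃ : ℝ := ∑ i' : Fin K, ∑ k, ind (B (Sum.inr i') k) *
      (Real.log (γ₀ / J) - Real.log ((i' : ℕ) + 1)) with hC₃
  have hG : ∀ θ, DMG τ₁ γ₀ J m s v B θ = τ₁ * (∑ i, ⟪θ i, w i⟫) + C₂ + C₃ := fun θ => rfl
  have hrow : ∀ i, (∀ k, B i k = false) ∨
      ∃ k₀, B i k₀ = true ∧ ∀ k, B i k = true → k = k₀ := by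
    intro i
    by_cases h : ∃ k, B i k = true
    · obtain ⟨k₀, hk₀⟩ := h
      exact Or.inr ⟨k₀, hk₀, fun k hk => hB.2 i k k₀ hk hk₀⟩
    · push_neg at h
      exact Or.inl fun k => by simpa using h k
  -- row norms
  have h1 : ∀ i : Fin L, τ₁ * ‖w (Sum.inl i)‖ =
      (∑ k, ind (B (Sum.inl i) k) * (τ₁ * ‖v k + s i‖ - τ₁ * ‖s i‖)) + τ₁ * ‖s i‖ := by
    intro i
    rcases hrow (Sum.inl i) with h | ⟨k₀, hk₀, huniq⟩
    · simp [hw, h, ind]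
    · have hs : (∑ k, ind (B (Sum.inl i) k) • v k) = v k₀ :=
        sum_ind_smul _ _ k₀ hk₀ huniq
      have hs2 : (∑ k, ind (B (Sum.inl i) k) • (τ₁ * ‖v k + s i‖ - τ₁ * ‖s i‖))
          = τ₁ * ‖v k₀ + s i‖ - τ₁ * ‖s i‖ :=
        sum_ind_smul _ _ k₀ hk₀ huniq
      simp only [smul_eq_mul] at hs2
      rw [hs2]
      simp [hw, hs]
  have h2 : ∀ i' : Fin K, τ₁ * ‖w (Sum.inr i')‖ =
      ∑ k, ind (B (Sum.inr i') k) * τ₁ := by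
    intro i'
    rcases hrow (Sum.inr i') with h | ⟨k₀, hk₀, huniq⟩
    · simp [hw, h, ind]
    · have hs : (∑ k, ind (B (Sum.inr i') k) • v k) = v k₀ :=
        sum_ind_smul _ _ k₀ hk₀ huniq
      have hs2 : (∑ k, ind (B (Sum.inr i') k) • τ₁) = τ₁ :=
        sum_ind_smul _ _ k₀ hk₀ huniq
      simp only [smul_eq_mul] at hs2
      rw [hs2, hw]
      simp [hs, hv k₀]
  -- key identity
  have key : (∑ i, ∑ k, ind (B i k) * DMcost τ₁ γ₀ J m s v i k) +
        τ₁ * ∑ i : Fin L, ‖s i‖ = τ₁ * (∑ i, ‖w i‖) + C₂ + C₃ := by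
    have hsplit : τ₁ * (∑ i, ‖w i‖) =
        (∑ i : Fin L, τ₁ * ‖w (Sum.inl i)‖) + ∑ i' : Fin K, τ₁ * ‖w (Sum.inr i')‖ := by
      rw [Fintype.sum_sum_type, mul_add, Finset.mul_sum, Finset.mul_sum]
    rw [Fintype.sum_sum_type, hsplit]
    have e1 : ∀ i : Fin L, (∑ k, ind (B (Sum.inl i) k) * DMcost τ₁ γ₀ J m s v (Sum.inl i) k)
        = (∑ k, ind (B (Sum.inl i) k) * (τ₁ * ‖v k + s i‖ - τ₁ * ‖s i‖))
          + (∑ k, ind (B (Sum.inl i) k) * Real.log (m i / (J - m i))) := by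
      intro i
      rw [← Finset.sum_add_distrib]
      refine Finset.sum_congr rfl fun k _ => ?_
      simp [DMcost]; ring
    have e2 : ∀ i' : Fin K, (∑ k, ind (B (Sum.inr i') k) * DMcost τ₁ γ₀ J m s v (Sum.inr i') k)
        = (∑ k, ind (B (Sum.inr i') k) * τ₁)
          + (∑ k, ind (B (Sum.inr i') k) * (Real.log (γ₀ / J) - Real.log ((i' : ℕ) + 1))) := by
      intro i'
      rw [← Finset.sum_add_distrib]
      refine Finset.sum_congr rfl fun k _ => ?_
      simp [DMcost]; ring
    simp only [e1, e2, Finset.sum_add_distrib, ← hC₂, ← hC₃]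
    have := Finset.sum_congr rfl (fun i (_ : i ∈ Finset.univ) => h1 i)
    rw [Finset.sum_congr rfl (fun i _ => h1 i), Finset.sum_congr rfl (fun i _ => h2 i),
      Finset.sum_add_distrib, ← Finset.mul_sum]
    ring
  constructor
  · rintro x ⟨θ, hθ, rfl⟩
    simp only [hG]
    have hle : (∑ i, ⟪θ i, w i⟫) ≤ ∑ i, ‖w i‖ := by
      refine Finset.sum_le_sum fun i _ => ?_
      calc ⟪θ i, w i⟫ ≤ ‖θ i‖ * ‖w i‖ := real_inner_le_norm _ _
        _ = ‖w i‖ := by rw [hθ i, one_mul]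
    have := mul_le_mul_of_nonneg_left hle hτ₁.le
    linarith [key]
  · intro b hb
    -- find unit vector
    have : Nontrivial E := Module.nontrivial_of_finrank_pos (R := ℝ) hdim
    obtain ⟨x, hx⟩ := exists_ne (0 : E)
    set e : E := ‖x‖⁻¹ • x with he
    have hex : ‖x‖ ≠ 0 := norm_ne_zero_iff.mpr hx
    have hee : ‖e‖ = 1 := by
      rw [he, norm_smul, norm_inv, norm_norm, inv_mul_cancel₀ hex]
    set θ : Fin L ⊕ Fin K → E := fun i => if w i = 0 then e else ‖w i‖⁻¹ • w i with hθ
    have hθ1 : ∀ i, ‖θ i‖ = 1 := by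
      intro i
      simp only [hθ]
      split_ifs with h
      · exact hee
      · rw [norm_smul, norm_inv, norm_norm, inv_mul_cancel₀ (norm_ne_zero_iff.mpr h)]
    have hθ2 : ∀ i, ⟪θ i, w i⟫ = ‖w i‖ := by
      intro i
      simp only [hθ]
      split_ifs with h
      · simp [h]
      · rw [real_inner_smul_left, real_inner_self_eq_norm_sq]
        have hn : ‖w i‖ ≠ 0 := norm_ne_zero_iff.mpr h
        field_simp
    have hval : DMG τ₁ γ₀ J m s v B θ =
        (∑ i, ∑ k, ind (B i k) * DMcost τ₁ γ₀ J m s v i k) +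
          τ₁ * ∑ i : Fin L, ‖s i‖ := by
      rw [hG, Finset.sum_congr rfl (fun i _ => hθ2 i)]
      linarith [key]
    exact hb ⟨θ, hθ1, hval⟩
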